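/- Let p > 1 and define g(t) := (1 - t^{1-p})/(1 - t) for t ∈ (0,1). Then g is increasing on (0,1). -/

import Mathlib

open Set Real

/- `g(t)` is the slope of the chord of `x ↦ x ^ (1 - p)` between `t` and `1`, and this power
function is strictly convex on `(0, ∞)` because its exponent is negative. Chord slopes of a
strictly convex function increase with the moving endpoint. -/

theorem strictConvexOn_rpow_of_neg {q : ℝ} (hq : q < 0) :
    StrictConvexOn ℝ (Ioi 0) fun x : ℝ ↦ x ^ q := by
  refine StrictMonoOn.strictConvexOn_of_deriv (convex_Ioi 0)
    (fun x hx ↦ (continuousAt_rpow_const x q (Or.inl (ne_of_gt hx))).continuousWithinAt) ?_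
  rw [interior_Ioi, deriv_rpow_const']
  intro x hx y _ hxy
  exact mul_lt_mul_of_neg_left (rpow_lt_rpow_of_neg hx hxy (by linarith)) hq

/-- For `p > 1`, the function `g(t) = (1 - t^{1-p})/(1 - t)` is increasing on `(0,1)`. -/
theorem stmt_3 (p : ℝ) (hp : 1 < p) :
    StrictMonoOn (fun t : ℝ => (1 - t ^ (1 - p)) / (1 - t)) (Set.Ioo (0 : ℝ) 1) := by
  intro x hx y hy hxy
  have hslope := (strictConvexOn_rpow_of_neg (sub_neg.2 hp)).secant_strict_mono
    (mem_Ioi.2 one_pos) hx.1 hy.1 hx.2.ne hy.2.ne hxy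
  simpa only [one_rpow, ← neg_sub (1 : ℝ), neg_div_neg_eq] using hslope
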